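/- Under the basic estimate ∥u∥² ≤ C·Q(u,u) for u ∈ Dom(∂) ∩ Dom(∂*) ∩ 𝓗^⟂, for every α ∈ 𝓗^⟂ there exists a unique φ ∈ 𝓗^⟂ ∩ Dom(∂) ∩ Dom(∂*) such that Q(φ, ψ) = (α, ψ) for all ψ ∈ Dom(∂) ∩ Dom(∂*); moreover the Green operator G : α ↦ φ is bounded with ∥Gα∥ ≤ C∥α∥. -/

import Mathlib

/-!
Write `J u = (∂u, ∂*u) ∈ H₂ ⊕ H₃` (ℓ² sum), a closed operator with kernel `𝓗` and
`Q(u, v) = ⟪J u, J v⟫`. On `Dom J ∩ 𝓗^⟂` the basic estimate reads `‖u‖ ≤ √C ‖J u‖`, so `J`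
restricted there has closed range and `J u ↦ ⟪α, u⟫` is a bounded functional on that range: the
Riesz representation theorem produces `φ`. As `J` vanishes on `𝓗` and `α ⟂ 𝓗`, the identity
extends from `Dom J ∩ 𝓗^⟂` to `Dom J` by splitting off the projection onto `𝓗`. Testing with
`ψ = φ` gives `‖φ‖² ≤ C Q(φ, φ) = C ⟪α, φ⟫`, and two solutions differ by an element of
`ker J ∩ 𝓗^⟂ = 0`.
-/

open scoped InnerProductSpace

namespace LinearPMap

section Closed

variable {𝕜 E F : Type*} [RCLike 𝕜] [NormedAddCommGroup E] [NormedSpace 𝕜 E]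
  [NormedAddCommGroup F] [NormedSpace 𝕜 F]

theorem IsClosed.domRestrict {f : E →ₗ.[𝕜] F} (hf : f.IsClosed) {S : Submodule 𝕜 E}
    (hS : _root_.IsClosed (S : Set E)) : (f.domRestrict S).IsClosed := by
  have hgraph : ((f.domRestrict S).graph : Set (E × F)) =
      (f.graph : Set (E × F)) ∩ Prod.fst ⁻¹' (S : Set E) := by
    ext ⟨x, y⟩
    simp only [SetLike.mem_coe, mem_graph_iff, Set.mem_inter_iff, Set.mem_preimage]
    constructor
    · rintro ⟨z, rfl, rfl⟩
      exact ⟨⟨⟨z, z.2.2⟩, rfl, (domRestrict_apply rfl).symm⟩, z.2.1⟩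
    · rintro ⟨⟨z, rfl, rfl⟩, hz⟩
      exact ⟨⟨z, hz, z.2⟩, rfl, domRestrict_apply rfl⟩
  unfold LinearPMap.IsClosed
  rw [hgraph]
  exact hf.inter (hS.preimage continuous_fst)

theorem IsClosed.isClosed_setOf_apply_eq_zero {f : E →ₗ.[𝕜] F} (hf : f.IsClosed) :
    _root_.IsClosed {x : E | ∃ hx : x ∈ f.domain, f ⟨x, hx⟩ = 0} := by
  have hker : {x : E | ∃ hx : x ∈ f.domain, f ⟨x, hx⟩ = 0} = (fun x => (x, (0 : F))) ⁻¹' f.graph := by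
    ext x
    simp only [Set.mem_ofPred_eq, Set.mem_preimage, SetLike.mem_coe, mem_graph_iff]
    constructor
    · rintro ⟨hx, h⟩
      exact ⟨⟨x, hx⟩, rfl, h⟩
    · rintro ⟨y, rfl, h⟩
      exact ⟨y.2, h⟩
  exact hker ▸ hf.preimage (continuous_id.prodMk continuous_const)

theorem IsClosed.isClosed_range [CompleteSpace E] [CompleteSpace F] {f : E →ₗ.[𝕜] F}
    (hf : f.IsClosed) {c : ℝ} (hc : ∀ x : f.domain, ‖(x : E)‖ ≤ c * ‖f x‖) :
    _root_.IsClosed (Set.range f) := by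
  have : CompleteSpace f.graph := hf.completeSpace_coe
  let g : f.graph →L[𝕜] F := (ContinuousLinearMap.snd 𝕜 E F).comp f.graph.subtypeL
  have hg : Set.range g = Set.range f := by
    ext y
    constructor
    · rintro ⟨⟨p, hp⟩, rfl⟩
      obtain ⟨x, hx, hxp⟩ := f.mem_graph_iff.1 hp
      exact ⟨x, hxp⟩
    · rintro ⟨x, rfl⟩
      exact ⟨⟨_, f.mem_graph x⟩, rfl⟩
  have hbound : ∀ p : f.graph, ‖p‖ ≤ ↑(c.toNNReal + 1) * ‖g p‖ := by
    rintro ⟨p, hp⟩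
    obtain ⟨x, hx, hxp⟩ := f.mem_graph_iff.1 hp
    have hc' : c ≤ c.toNNReal := Real.le_coe_toNNReal c
    rw [Submodule.coe_norm, norm_prod_le_iff]
    simp only [g, ContinuousLinearMap.coe_comp, Function.comp_apply, Submodule.subtypeL_apply,
      ContinuousLinearMap.coe_snd', NNReal.coe_add, NNReal.coe_one, ← hx, ← hxp]
    constructor <;> nlinarith [hc x, norm_nonneg (f x), c.toNNReal.2]
  exact hg ▸ (g.antilipschitz_of_bound hbound).isClosed_range g.uniformContinuous

end Closed

section ProdL2

variable {𝕜 E F G : Type*} [RCLike 𝕜] [NormedAddCommGroup E] [NormedSpace 𝕜 E]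
  [NormedAddCommGroup F] [InnerProductSpace 𝕜 F] [NormedAddCommGroup G] [InnerProductSpace 𝕜 G]

def prodL2 (T : E →ₗ.[𝕜] F) (S : E →ₗ.[𝕜] G) : E →ₗ.[𝕜] WithLp 2 (F × G) where
  domain := T.domain ⊓ S.domain
  toFun := (WithLp.linearEquiv 2 𝕜 (F × G)).symm.toLinearMap ∘ₗ
    (T.toFun ∘ₗ Submodule.inclusion inf_le_left).prod (S.toFun ∘ₗ Submodule.inclusion inf_le_right)

variable {T : E →ₗ.[𝕜] F} {S : E →ₗ.[𝕜] G}

theorem prodL2_apply_eq_zero_iff (x : (T.prodL2 S).domain) :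
    T.prodL2 S x = 0 ↔ T ⟨x, x.2.1⟩ = 0 ∧ S ⟨x, x.2.2⟩ = 0 := by
  rw [← (WithLp.ofLp_injective 2).eq_iff, Prod.ext_iff]
  rfl

theorem norm_prodL2_apply_sq (x : (T.prodL2 S).domain) :
    ‖T.prodL2 S x‖ ^ 2 = ‖T ⟨x, x.2.1⟩‖ ^ 2 + ‖S ⟨x, x.2.2⟩‖ ^ 2 :=
  WithLp.prod_norm_sq_eq_of_L2 _

theorem mem_graph_prodL2 {x : E} {z : WithLp 2 (F × G)} :
    (x, z) ∈ (T.prodL2 S).graph ↔ (x, z.fst) ∈ T.graph ∧ (x, z.snd) ∈ S.graph := by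
  simp only [mem_graph_iff]
  constructor
  · rintro ⟨y, rfl, rfl⟩
    exact ⟨⟨⟨y, y.2.1⟩, rfl, rfl⟩, ⟨⟨y, y.2.2⟩, rfl, rfl⟩⟩
  · rintro ⟨⟨y₁, rfl, h₁⟩, ⟨y₂, hy, h₂⟩⟩
    refine ⟨⟨y₁, y₁.2, hy ▸ y₂.2⟩, rfl, ?_⟩
    exact WithLp.ofLp_injective 2 (Prod.ext h₁ ((congrArg S (Subtype.ext hy.symm)).trans h₂))

theorem IsClosed.prodL2 (hT : T.IsClosed) (hS : S.IsClosed) : (T.prodL2 S).IsClosed := by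
  have hgraph : ((T.prodL2 S).graph : Set (E × WithLp 2 (F × G))) =
      (fun p => (p.1, p.2.fst)) ⁻¹' T.graph ∩ (fun p => (p.1, p.2.snd)) ⁻¹' S.graph := by
    ext ⟨x, z⟩
    exact mem_graph_prodL2
  unfold LinearPMap.IsClosed
  rw [hgraph]
  exact (hT.preimage (by fun_prop)).inter (hS.preimage (by fun_prop))

end ProdL2

end LinearPMap

namespace LinearMap

variable {𝕜 V E : Type*} [RCLike 𝕜] [AddCommGroup V] [Module 𝕜 V]
  [NormedAddCommGroup E] [InnerProductSpace 𝕜 E]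

theorem exists_inner_apply_eq_of_norm_le (f : V →ₗ[𝕜] E) [CompleteSpace (range f)]
    (ℓ : V →ₗ[𝕜] 𝕜) {M : ℝ} (hℓ : ∀ v, ‖ℓ v‖ ≤ M * ‖f v‖) :
    ∃ φ : V, ∀ v, ⟪f φ, f v⟫_𝕜 = ℓ v := by
  have hker : ker f ≤ ker ℓ := fun v hv => by
    simpa [mem_ker.1 hv] using hℓ v
  let ℓ' : range f →ₗ[𝕜] 𝕜 := (ker f).liftQ ℓ hker ∘ₗ f.quotKerEquivRange.symm.toLinearMap
  have hℓ' : ∀ v, ℓ' ⟨f v, mem_range_self f v⟩ = ℓ v := fun v => by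
    simp [ℓ', quotKerEquivRange_symm_apply_image]
  have hbound : ∀ z, ‖ℓ' z‖ ≤ M * ‖z‖ := by
    rintro ⟨_, v, rfl⟩
    exact (hℓ' v).symm ▸ hℓ v
  obtain ⟨φ, hφ⟩ := ((InnerProductSpace.toDual 𝕜 (range f)).symm (ℓ'.mkContinuous M hbound)).2
  refine ⟨φ, fun v => ?_⟩
  rw [← hℓ' v, hφ]
  exact InnerProductSpace.toDual_symm_apply (𝕜 := 𝕜) (E := range f) (x := ⟨f v, mem_range_self f v⟩)

end LinearMap

theorem norm_le_mul_norm_of_sq_le_of_inner_self_eq {𝕜 E F : Type*} [RCLike 𝕜]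
    [NormedAddCommGroup E] [InnerProductSpace 𝕜 E] [NormedAddCommGroup F]
    [InnerProductSpace 𝕜 F] {x α : E} {y : F} {C : ℝ} (hC : 0 ≤ C)
    (hx : ‖x‖ ^ 2 ≤ C * ‖y‖ ^ 2) (hy : ⟪y, y⟫_𝕜 = ⟪α, x⟫_𝕜) : ‖x‖ ≤ C * ‖α‖ := by
  have hyα : ‖y‖ ^ 2 ≤ ‖α‖ * ‖x‖ := by
    rw [← inner_self_eq_norm_sq (𝕜 := 𝕜), hy]
    exact (RCLike.re_le_norm _).trans (norm_inner_le_norm _ _)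
  have hx' : ‖x‖ ^ 2 ≤ C * ‖α‖ * ‖x‖ := by
    calc ‖x‖ ^ 2 ≤ C * ‖y‖ ^ 2 := hx
      _ ≤ C * (‖α‖ * ‖x‖) := by gcongr
      _ = C * ‖α‖ * ‖x‖ := by ring
  nlinarith [norm_nonneg x, norm_nonneg α, mul_nonneg hC (norm_nonneg α)]

namespace LinearPMap

variable {𝕜 E F : Type*} [RCLike 𝕜] [NormedAddCommGroup E] [InnerProductSpace 𝕜 E]
  [NormedAddCommGroup F] [InnerProductSpace 𝕜 F] {J : E →ₗ.[𝕜] F} {K : Submodule 𝕜 E}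

theorem exists_domRestrict_orthogonal_apply_eq [K.HasOrthogonalProjection]
    (hK : ∀ u, u ∈ K ↔ ∃ h : u ∈ J.domain, J ⟨u, h⟩ = 0) (ψ : J.domain) :
    ∃ v : (J.domRestrict Kᗮ).domain, J.domRestrict Kᗮ v = J ψ ∧ (ψ : E) - v ∈ K := by
  obtain ⟨w, hwK, z, hz, hψ⟩ := K.exists_add_mem_mem_orthogonal (ψ : E)
  obtain ⟨hw, hJw⟩ := (hK w).1 hwK
  have hzψ : z = ψ - w := eq_sub_of_add_eq' hψ.symm
  have hzJ : z ∈ J.domain := hzψ ▸ sub_mem ψ.2 hw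
  refine ⟨⟨z, hz, hzJ⟩, ?_, by simpa [hzψ] using hwK⟩
  calc J.domRestrict Kᗮ ⟨z, hz, hzJ⟩ = J (ψ - ⟨w, hw⟩) := domRestrict_apply (by simp [hzψ])
    _ = J ψ := by rw [map_sub, hJw, sub_zero]

theorem IsClosed.exists_inner_apply_eq_inner [CompleteSpace E] [CompleteSpace F]
    {f : E →ₗ.[𝕜] F} (hf : f.IsClosed) {c : ℝ} (hc : ∀ x : f.domain, ‖(x : E)‖ ≤ c * ‖f x‖)
    (α : E) : ∃ φ : f.domain, ∀ v : f.domain, ⟪f φ, f v⟫_𝕜 = ⟪α, v⟫_𝕜 := by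
  have : CompleteSpace (LinearMap.range f.toFun) :=
    (hf.isClosed_range hc).completeSpace_coe
  refine f.toFun.exists_inner_apply_eq_of_norm_le ((innerₛₗ 𝕜 α).comp f.domain.subtype)
    (M := ‖α‖ * c) fun v => ?_
  calc ‖⟪α, (v : E)⟫_𝕜‖ ≤ ‖α‖ * ‖(v : E)‖ := norm_inner_le_norm _ _
    _ ≤ ‖α‖ * (c * ‖f v‖) := by gcongr; exact hc v
    _ = ‖α‖ * c * ‖f v‖ := by ring

theorem eq_of_forall_inner_apply_eq (hK : ∀ u, u ∈ K ↔ ∃ h : u ∈ J.domain, J ⟨u, h⟩ = 0)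
    {φ₁ φ₂ : J.domain} (h₁ : (φ₁ : E) ∈ Kᗮ) (h₂ : (φ₂ : E) ∈ Kᗮ)
    (h : ∀ ψ : J.domain, ⟪J φ₁, J ψ⟫_𝕜 = ⟪J φ₂, J ψ⟫_𝕜) : φ₁ = φ₂ := by
  have hJ : J (φ₁ - φ₂) = 0 := by
    have := h (φ₁ - φ₂)
    rwa [← sub_eq_zero, ← inner_sub_left, ← map_sub, inner_self_eq_zero] at this
  have hK' : (φ₁ - φ₂ : E) ∈ K := (hK _).2 ⟨(φ₁ - φ₂).2, hJ⟩
  exact Subtype.ext <| sub_eq_zero.1 <|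
    Submodule.disjoint_def.1 K.orthogonal_disjoint _ hK' (sub_mem h₁ h₂)

theorem IsClosed.existsUnique_inner_apply_eq_inner [CompleteSpace E] [CompleteSpace F]
    (hJ : J.IsClosed) (hK : ∀ u, u ∈ K ↔ ∃ h : u ∈ J.domain, J ⟨u, h⟩ = 0) {C : ℝ} (hC : 0 ≤ C)
    (hest : ∀ u : J.domain, (u : E) ∈ Kᗮ → ‖(u : E)‖ ^ 2 ≤ C * ‖J u‖ ^ 2)
    {α : E} (hα : α ∈ Kᗮ) :
    ∃! φ : E, ∃ h : φ ∈ J.domain, φ ∈ Kᗮ ∧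
      (∀ ψ : J.domain, ⟪J ⟨φ, h⟩, J ψ⟫_𝕜 = ⟪α, ψ⟫_𝕜) ∧ ‖φ‖ ≤ C * ‖α‖ := by
  have hKclosed : _root_.IsClosed (K : Set E) :=
    (Set.ext hK : (K : Set E) = _) ▸ hJ.isClosed_setOf_apply_eq_zero
  have : CompleteSpace K := hKclosed.completeSpace_coe
  have hΦ : ∀ v : (J.domRestrict Kᗮ).domain, J.domRestrict Kᗮ v = J ⟨v, v.2.2⟩ :=
    fun v => domRestrict_apply rfl
  have hΦbound : ∀ v : (J.domRestrict Kᗮ).domain, ‖(v : E)‖ ≤ √C * ‖J.domRestrict Kᗮ v‖ := by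
    intro v
    have := Real.le_sqrt_of_sq_le (hest ⟨v, v.2.2⟩ v.2.1)
    rwa [Real.sqrt_mul' _ (sq_nonneg _), Real.sqrt_sq (norm_nonneg _), ← hΦ] at this
  obtain ⟨φ, hφ⟩ := (hJ.domRestrict (Submodule.isClosed_orthogonal K)).exists_inner_apply_eq_inner
    hΦbound α
  have hsol : ∀ ψ : J.domain, ⟪J ⟨φ, φ.2.2⟩, J ψ⟫_𝕜 = ⟪α, ψ⟫_𝕜 := by
    intro ψ
    obtain ⟨v, hv, hψv⟩ := exists_domRestrict_orthogonal_apply_eq hK ψ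
    calc ⟪J ⟨φ, φ.2.2⟩, J ψ⟫_𝕜 = ⟪J.domRestrict Kᗮ φ, J.domRestrict Kᗮ v⟫_𝕜 := by rw [hv, hΦ]
      _ = ⟪α, v⟫_𝕜 := hφ v
      _ = ⟪α, ψ⟫_𝕜 := by
        rw [← sub_eq_zero, ← inner_sub_right, ← neg_sub, inner_neg_right,
          K.inner_left_of_mem_orthogonal hψv hα, neg_zero]
  refine ⟨φ, ⟨φ.2.2, φ.2.1, hsol,
    norm_le_mul_norm_of_sq_le_of_inner_self_eq hC (hest ⟨φ, φ.2.2⟩ φ.2.1) (hsol _)⟩, ?_⟩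
  rintro φ' ⟨h', hφ'K, hsol', -⟩
  have := eq_of_forall_inner_apply_eq hK (φ₁ := ⟨φ', h'⟩) (φ₂ := ⟨φ, φ.2.2⟩) hφ'K φ.2.1
    fun ψ => (hsol' ψ).trans (hsol ψ).symm
  exact congrArg Subtype.val this

end LinearPMap

theorem green_operator_exists_general
    {H H₂ H₃ : Type*} [NormedAddCommGroup H] [InnerProductSpace ℂ H] [CompleteSpace H]
    [NormedAddCommGroup H₂] [InnerProductSpace ℂ H₂] [CompleteSpace H₂]
    [NormedAddCommGroup H₃] [InnerProductSpace ℂ H₃] [CompleteSpace H₃]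
    (T : H →ₗ.[ℂ] H₂) (S : H →ₗ.[ℂ] H₃)
    (hTclosed : T.IsClosed) (hSclosed : S.IsClosed)
    (K : Submodule ℂ H)
    (hK : ∀ u : H, u ∈ K ↔ ∃ (h1 : u ∈ T.domain) (h2 : u ∈ S.domain),
      T ⟨u, h1⟩ = 0 ∧ S ⟨u, h2⟩ = 0)
    (C : ℝ) (hC : 0 < C)
    (hest : ∀ (u : H) (h1 : u ∈ T.domain) (h2 : u ∈ S.domain),
      (∀ w ∈ K, ⟪u, w⟫_ℂ = 0) →
      ‖u‖ ^ 2 ≤ C * (‖T ⟨u, h1⟩‖ ^ 2 + ‖S ⟨u, h2⟩‖ ^ 2))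
    (α : H) (hα : ∀ w ∈ K, ⟪α, w⟫_ℂ = 0) :
    ∃! φ : H, ∃ (h1 : φ ∈ T.domain) (h2 : φ ∈ S.domain),
      (∀ w ∈ K, ⟪φ, w⟫_ℂ = 0) ∧
      (∀ (ψ : H) (p1 : ψ ∈ T.domain) (p2 : ψ ∈ S.domain),
        ⟪T ⟨φ, h1⟩, T ⟨ψ, p1⟩⟫_ℂ + ⟪S ⟨φ, h2⟩, S ⟨ψ, p2⟩⟫_ℂ = ⟪α, ψ⟫_ℂ) ∧
      ‖φ‖ ≤ C * ‖α‖ := by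
  have hK' : ∀ u, u ∈ K ↔ ∃ h : u ∈ (T.prodL2 S).domain, T.prodL2 S ⟨u, h⟩ = 0 := fun u => by
    rw [hK u]
    constructor
    · rintro ⟨h1, h2, hT, hS⟩
      exact ⟨⟨h1, h2⟩, (LinearPMap.prodL2_apply_eq_zero_iff _).2 ⟨hT, hS⟩⟩
    · rintro ⟨h, hTS⟩
      exact ⟨h.1, h.2, (LinearPMap.prodL2_apply_eq_zero_iff _).1 hTS⟩
  have hest' : ∀ u : (T.prodL2 S).domain, (u : H) ∈ Kᗮ → ‖(u : H)‖ ^ 2 ≤ C * ‖T.prodL2 S u‖ ^ 2 :=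
    fun u hu => LinearPMap.norm_prodL2_apply_sq u ▸ hest u u.2.1 u.2.2 ((K.mem_orthogonal' u).1 hu)
  obtain ⟨φ, ⟨h, hφK, hφ, hφα⟩, huniq⟩ :=
    (hTclosed.prodL2 hSclosed).existsUnique_inner_apply_eq_inner hK' hC.le hest'
      ((K.mem_orthogonal' α).2 hα)
  refine ⟨φ, ⟨h.1, h.2, (K.mem_orthogonal' φ).1 hφK, fun ψ p1 p2 => hφ ⟨ψ, p1, p2⟩, hφα⟩, ?_⟩
  rintro φ' ⟨h1, h2, hφ'K, hφ', hφ'α⟩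
  exact huniq φ' ⟨⟨h1, h2⟩, (K.mem_orthogonal' φ').2 hφ'K, fun ψ => hφ' ψ ψ.2.1 ψ.2.2, hφ'α⟩

/-- Existence, uniqueness and boundedness of the Green operator (Corollary 5.5):
under the basic estimate `∥u∥² ≤ C·Q(u,u)` on `Dom ∂ ∩ Dom ∂* ∩ 𝓗^⟂`, for
every `α ⟂ 𝓗` there is a unique `φ ∈ 𝓗^⟂ ∩ Dom ∂ ∩ Dom ∂*` with
`Q(φ, ψ) = (α, ψ)` for all `ψ ∈ Dom ∂ ∩ Dom ∂*`, and moreover `∥φ∥ ≤ C·∥α∥`. -/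
theorem green_operator_exists
    {H H₂ H₃ : Type*} [NormedAddCommGroup H] [InnerProductSpace ℂ H] [CompleteSpace H]
    [NormedAddCommGroup H₂] [InnerProductSpace ℂ H₂] [CompleteSpace H₂]
    [NormedAddCommGroup H₃] [InnerProductSpace ℂ H₃] [CompleteSpace H₃]
    (T : H →ₗ.[ℂ] H₂) (S : H →ₗ.[ℂ] H₃)
    (hTclosed : T.IsClosed) (hSclosed : S.IsClosed)
    (hdense : Dense {x : H | x ∈ T.domain ∧ x ∈ S.domain})
    (K : Submodule ℂ H)
    (hK : ∀ u : H, u ∈ K ↔ ∃ (h1 : u ∈ T.domain) (h2 : u ∈ S.domain),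
      T ⟨u, h1⟩ = 0 ∧ S ⟨u, h2⟩ = 0)
    (C : ℝ) (hC : 0 < C)
    (hest : ∀ (u : H) (h1 : u ∈ T.domain) (h2 : u ∈ S.domain),
      (∀ w ∈ K, ⟪u, w⟫_ℂ = 0) →
      ‖u‖ ^ 2 ≤ C * (‖T ⟨u, h1⟩‖ ^ 2 + ‖S ⟨u, h2⟩‖ ^ 2))
    (α : H) (hα : ∀ w ∈ K, ⟪α, w⟫_ℂ = 0) :
    ∃! φ : H, ∃ (h1 : φ ∈ T.domain) (h2 : φ ∈ S.domain),
      (∀ w ∈ K, ⟪φ, w⟫_ℂ = 0) ∧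
      (∀ (ψ : H) (p1 : ψ ∈ T.domain) (p2 : ψ ∈ S.domain),
        ⟪T ⟨φ, h1⟩, T ⟨ψ, p1⟩⟫_ℂ + ⟪S ⟨φ, h2⟩, S ⟨ψ, p2⟩⟫_ℂ = ⟪α, ψ⟫_ℂ) ∧
      ‖φ‖ ≤ C * ‖α‖ :=
  green_operator_exists_general T S hTclosed hSclosed K hK C hC hest α hα
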